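/- arXiv:1712.05666 — 6 statements merged into one kernel-verified Lean document; each statement's English description precedes it below -/
import Mathlib

section
/- The function y ↦ y/√(Δ² + 4x²y) is concave on [0, ∞) for any fixed x, Δ ∈ ℝ with Δ ≠ 0. -/
/-!
With `s = √(a + b y)` one has `y / s = (s - a / s) / b` when `b > 0`. The map `y ↦ s` is concave,
and `s ↦ s - a / s` is concave and nondecreasing on `s > 0`, so the composition is concave.
For `b = 0` the function is linear.
-/

open Set

theorem concaveOn_sub_div_self {a : ℝ} (ha : 0 ≤ a) :
    ConcaveOn ℝ (Ioi 0) fun s : ℝ => s - a / s := by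
  have h := (concaveOn_id (convex_Ioi (0 : ℝ))).sub ((convexOn_zpow (𝕜 := ℝ) (-1)).smul ha)
  refine h.congr fun s _ => ?_
  simp [div_eq_mul_inv]

theorem monotoneOn_sub_div_self {a : ℝ} (ha : 0 ≤ a) :
    MonotoneOn (fun s : ℝ => s - a / s) (Ioi 0) := by
  intro s hs t _ hst
  exact sub_le_sub hst (div_le_div_of_nonneg_left ha hs hst)

theorem concaveOn_sqrt_affine {a b : ℝ} (ha : 0 ≤ a) (hb : 0 ≤ b) :
    ConcaveOn ℝ (Ici 0) fun y : ℝ => √(a + b * y) := by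
  have h := Real.strictConcaveOn_sqrt.concaveOn.comp_affineMap
    (AffineMap.const ℝ ℝ a + b • AffineMap.id ℝ ℝ)
  refine (h.subset (fun y (hy : 0 ≤ y) => ?_) (convex_Ici 0)).congr fun y _ => ?_
  · change 0 ≤ a + b * y
    positivity
  · simp

theorem concaveOn_div_sqrt_affine {a b : ℝ} (ha : 0 < a) (hb : 0 ≤ b) :
    ConcaveOn ℝ (Ici 0) fun y : ℝ => y / √(a + b * y) := by
  rcases hb.eq_or_lt with rfl | hb
  · refine ((concaveOn_id (convex_Ici 0)).smul (inv_nonneg.2 (Real.sqrt_nonneg a))).congr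
      fun y _ => ?_
    simp [div_eq_inv_mul]
  have hpos : ∀ y ∈ Ici (0 : ℝ), 0 < √(a + b * y) := fun y (hy : 0 ≤ y) =>
    Real.sqrt_pos.2 (by positivity)
  have himage : (fun y : ℝ => √(a + b * y)) '' Ici 0 ⊆ Ioi 0 := by
    rintro _ ⟨y, hy, rfl⟩
    exact hpos y hy
  have hcomp := ((concaveOn_sub_div_self ha.le).subset himage
    (isPreconnected_Ici.image _ (by fun_prop)).convex).comp
    (concaveOn_sqrt_affine ha.le hb.le) ((monotoneOn_sub_div_self ha.le).mono himage)
  refine (hcomp.smul (inv_nonneg.2 hb.le)).congr fun y (hy : 0 ≤ y) => ?_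
  have hs := hpos y hy
  have hsq : √(a + b * y) ^ 2 = a + b * y := Real.sq_sqrt (by positivity)
  simp only [Function.comp_apply, smul_eq_mul]
  field_simp
  linear_combination hsq

theorem stmt_6 (x Δ : ℝ) (hΔ : Δ ≠ 0) :
    ConcaveOn ℝ (Set.Ici 0) (fun y : ℝ => y / Real.sqrt (Δ^2 + 4*x^2*y)) :=
  concaveOn_div_sqrt_affine (by positivity) (by positivity)
end

section
/- Suppose 0 < |Δ| < ω. Then for all natural numbers m, n and all g ∈ ℝ, the equation f_{n+1}(g) − f_n(g) = f_{m+1}(g) − f_m(g) with m ≠ n holds if and only if g = 0, where f_n(g) = (1/2)·√(Δ² + 4g²(n+1)). -/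
theorem stmt_9 (Δ ω g : ℝ) (hΔ : 0 < |Δ|) (hΔω : |Δ| < ω) (m n : ℕ) (hmn : m ≠ n) :
    (1/2) * Real.sqrt (Δ^2 + 4*g^2*(n+1+1)) - (1/2) * Real.sqrt (Δ^2 + 4*g^2*(n+1))
      = (1/2) * Real.sqrt (Δ^2 + 4*g^2*(m+1+1)) - (1/2) * Real.sqrt (Δ^2 + 4*g^2*(m+1))
    ↔ g = 0 := by
  constructor
  · intro h
    by_contra hg
    have hΔ0 : Δ ≠ 0 := by rwa [abs_pos] at hΔ
    have hb : (0:ℝ) < 4*g^2 := by positivity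
    set S : ℕ → ℝ := fun k => Real.sqrt (Δ^2 + 4*g^2*(k+1)) with hS
    have hpos : ∀ k : ℕ, 0 < Δ^2 + 4*g^2*((k:ℝ)+1) := fun k => by positivity
    have hSpos : ∀ k, 0 < S k := fun k => Real.sqrt_pos.mpr (hpos k)
    have hmono : StrictMono S := by
      intro a b hab
      apply Real.sqrt_lt_sqrt (le_of_lt (hpos a))
      have : (a:ℝ) < b := Nat.cast_lt.mpr hab
      nlinarith
    have hdiff : ∀ k : ℕ, S (k+1) - S k = (4*g^2) / (S (k+1) + S k) := by
      intro k
      have hden : 0 < S (k+1) + S k := add_pos (hSpos (k+1)) (hSpos k)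
      rw [eq_div_iff (ne_of_gt hden)]
      have h1 : S (k+1) ^ 2 = Δ^2 + 4*g^2*((k:ℝ)+1+1) := by
        have := Real.sq_sqrt (le_of_lt (hpos (k+1)))
        simp only [hS]
        push_cast at this ⊢
        linarith
      have h2 : S k ^ 2 = Δ^2 + 4*g^2*((k:ℝ)+1) :=
        Real.sq_sqrt (le_of_lt (hpos k))
      nlinarith [h1, h2]
    have hS' : S (n+1) - S n = S (m+1) - S m := by
      simp only [hS]
      push_cast
      linarith
    rw [hdiff n, hdiff m] at hS'
    have hdenn : 0 < S (n+1) + S n := add_pos (hSpos (n+1)) (hSpos n)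
    have hdenm : 0 < S (m+1) + S m := add_pos (hSpos (m+1)) (hSpos m)
    have heq : S (n+1) + S n = S (m+1) + S m := by
      rw [div_eq_div_iff (ne_of_gt hdenn) (ne_of_gt hdenm)] at hS'
      have h4 : (4*g^2) ≠ 0 := ne_of_gt hb
      field_simp at hS'
      nlinarith [hS']
    rcases lt_trichotomy m n with h' | h' | h'
    · have h1 := hmono (Nat.succ_lt_succ h')
      have h2 := hmono h'
      linarith
    · exact hmn h'
    · have h1 := hmono (Nat.succ_lt_succ h')
      have h2 := hmono h'
      linarith
  · intro hg
    subst hg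
    norm_num
end

section
/- If Δ ≠ 0 or g ≠ 0, then for all m, n ∈ ℕ the equation f_{n+1}(g) − f_n(g) = f_{m+1}(g) + f_m(g) fails; i.e. this equation holds only if g = 0 and Δ = 0. Here f_n(g) = (1/2)·√(Δ² + 4g²(n+1)) and it is additionally assumed that |Δ| < ω with ω > 0 not entering the equation (the key estimate is f_{n+1}(g) − f_n(g) ≤ 2|g|/(√(n+2)+√(n+1)) < |g|(√(m+2)+√(m+1)) ≤ f_{m+1}(g) + f_m(g) for g ≠ 0, with strictness if Δ ≠ 0). -/
set_option maxHeartbeats 1000000 in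
theorem stmt_11 (Δ g : ℝ) (m n : ℕ)
    (h : (1/2) * Real.sqrt (Δ^2 + 4*g^2*(n+1+1)) - (1/2) * Real.sqrt (Δ^2 + 4*g^2*(n+1))
       = (1/2) * Real.sqrt (Δ^2 + 4*g^2*(m+1+1)) + (1/2) * Real.sqrt (Δ^2 + 4*g^2*(m+1))) :
    g = 0 ∧ Δ = 0 := by
  have hg : g = 0 := by
    by_contra hg
    have hg2 : 0 < g^2 := by positivity
    set s1 := Real.sqrt (Δ^2 + 4*g^2*(n+1+1)) with hs1d
    set s2 := Real.sqrt (Δ^2 + 4*g^2*(n+1)) with hs2d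
    set t1 := Real.sqrt (Δ^2 + 4*g^2*(m+1+1)) with ht1d
    set t2 := Real.sqrt (Δ^2 + 4*g^2*(m+1)) with ht2d
    have hn : (0:ℝ) ≤ (n:ℝ) := Nat.cast_nonneg n
    have hm : (0:ℝ) ≤ (m:ℝ) := Nat.cast_nonneg m
    have hs1 : s1^2 = Δ^2 + 4*g^2*(n+1+1) := Real.sq_sqrt (by positivity)
    have hs2 : s2^2 = Δ^2 + 4*g^2*(n+1) := Real.sq_sqrt (by positivity)
    have ht1 : t1^2 = Δ^2 + 4*g^2*(m+1+1) := Real.sq_sqrt (by positivity)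
    have ht2 : t2^2 = Δ^2 + 4*g^2*(m+1) := Real.sq_sqrt (by positivity)
    have hs1n : 0 ≤ s1 := Real.sqrt_nonneg _
    have hs2n : 0 ≤ s2 := Real.sqrt_nonneg _
    have ht1n : 0 ≤ t1 := Real.sqrt_nonneg _
    have ht2n : 0 ≤ t2 := Real.sqrt_nonneg _
    -- from h : s1 - s2 = t1 + t2
    have hd : s1 - s2 = t1 + t2 := by linarith
    have key : (s1 - s2) * (s1 + s2) = 4*g^2 := by nlinarith [hs1, hs2]
    have e : (t1 + t2) * (s1 + s2) = 4*g^2 := by rw [← hd]; exact key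
    have h1 : 12*g^2 ≤ (s1+s2)^2 := by nlinarith [mul_nonneg hs1n hs2n, sq_nonneg Δ, mul_nonneg hn hg2.le]
    have h2 : 12*g^2 ≤ (t1+t2)^2 := by nlinarith [mul_nonneg ht1n ht2n, sq_nonneg Δ, mul_nonneg hm hg2.le]
    have h3 : (12*g^2)*(12*g^2) ≤ (t1+t2)^2*(s1+s2)^2 :=
      mul_le_mul h2 h1 (by positivity) (by positivity)
    rw [← mul_pow, e] at h3
    nlinarith [mul_pos hg2 hg2]
  subst hg
  have hz : ∀ x : ℝ, Δ^2 + 4*0^2*x = Δ^2 := by intro x; ring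
  rw [hz, hz, hz, hz] at h
  have h' : Real.sqrt (Δ^2) = 0 := by linarith
  rw [Real.sqrt_sq_eq_abs, abs_eq_zero] at h'
  exact ⟨rfl, h'⟩
end

section
/- Fix Δ ∈ ℝ, Δ ≠ 0, and m, n ∈ ℕ with m < n. Then for g > 0, the function g ↦ f_{m+1}(g) − f_m(g) − f_{n+1}(g) + f_n(g) is strictly increasing, where f_k(g) = (1/2)·√(Δ² + 4g²(k+1)). -/
set_option maxHeartbeats 1000000

private lemma aux1 (A c s t : ℝ) (hA : 0 < A) (hc : 0 ≤ c) (hs : 0 < s) (hst : s < t) :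
    s * Real.sqrt (A + t*c) < t * Real.sqrt (A + s*c) := by
  have ht : 0 < t := hs.trans hst
  have h1 : 0 < A + t*c := add_pos_of_pos_of_nonneg hA (mul_nonneg ht.le hc)
  have h2 : 0 < A + s*c := add_pos_of_pos_of_nonneg hA (mul_nonneg hs.le hc)
  have e1 : s * Real.sqrt (A + t*c) = Real.sqrt (s^2 * (A + t*c)) := by
    rw [Real.sqrt_mul (by positivity), Real.sqrt_sq hs.le]
  have e2 : t * Real.sqrt (A + s*c) = Real.sqrt (t^2 * (A + s*c)) := by
    rw [Real.sqrt_mul (by positivity), Real.sqrt_sq ht.le]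
  rw [e1, e2]
  apply Real.sqrt_lt_sqrt (by positivity)
  have k1 : 0 < A * ((t - s) * (s + t)) :=
    mul_pos hA (mul_pos (by linarith) (by linarith))
  have k2 : 0 ≤ s * t * c * (t - s) :=
    mul_nonneg (mul_nonneg (mul_nonneg hs.le ht.le) hc) (by linarith)
  nlinarith [k1, k2]

private lemma aux2 (A c c' s t : ℝ) (hA : 0 < A) (hc : 0 ≤ c) (hc' : 0 ≤ c')
    (hs : 0 < s) (hst : s < t) :
    s * (Real.sqrt (A + t*c) * Real.sqrt (A + t*c'))
      < t * (Real.sqrt (A + s*c) * Real.sqrt (A + s*c')) := by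
  have ht : 0 < t := hs.trans hst
  have h1 : 0 < A + t*c := add_pos_of_pos_of_nonneg hA (mul_nonneg ht.le hc)
  have h1' : 0 < A + t*c' := add_pos_of_pos_of_nonneg hA (mul_nonneg ht.le hc')
  have h2 : 0 < A + s*c := add_pos_of_pos_of_nonneg hA (mul_nonneg hs.le hc)
  have h2' : 0 < A + s*c' := add_pos_of_pos_of_nonneg hA (mul_nonneg hs.le hc')
  have e1 : s * (Real.sqrt (A + t*c) * Real.sqrt (A + t*c'))
      = Real.sqrt (s^2 * ((A + t*c) * (A + t*c'))) := by
    rw [Real.sqrt_mul (by positivity), Real.sqrt_mul h1.le, Real.sqrt_sq hs.le]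
  have e2 : t * (Real.sqrt (A + s*c) * Real.sqrt (A + s*c'))
      = Real.sqrt (t^2 * ((A + s*c) * (A + s*c'))) := by
    rw [Real.sqrt_mul (by positivity), Real.sqrt_mul h2.le, Real.sqrt_sq ht.le]
  rw [e1, e2]
  apply Real.sqrt_lt_sqrt (by positivity)
  have k1 : 0 < (A * A) * ((t - s) * (s + t)) :=
    mul_pos (mul_pos hA hA) (mul_pos (by linarith) (by linarith))
  have k2 : 0 ≤ (A * (s * t) * (c + c')) * (t - s) :=
    mul_nonneg (mul_nonneg (mul_nonneg hA.le (mul_nonneg hs.le ht.le))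
      (add_nonneg hc hc')) (by linarith)
  nlinarith [k1, k2]

private lemma key (A c1 c2 c3 c4 δ ρ s t : ℝ) (hA : 0 < A) (hc1 : 0 ≤ c1)
    (hδ : 0 < δ) (hρ : 0 < ρ) (h2 : c2 = c1 + δ) (h3 : c3 = c1 + ρ) (h4 : c4 = c3 + δ)
    (hs : 0 < s) (hst : s < t) :
    Real.sqrt (A + s*c2) - Real.sqrt (A + s*c1) - Real.sqrt (A + s*c4) + Real.sqrt (A + s*c3)
      < Real.sqrt (A + t*c2) - Real.sqrt (A + t*c1) - Real.sqrt (A + t*c4)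
        + Real.sqrt (A + t*c3) := by
  have ht : 0 < t := hs.trans hst
  have hc2 : 0 ≤ c2 := by linarith
  have hc3 : 0 ≤ c3 := by linarith
  have hc4 : 0 ≤ c4 := by linarith
  have p1 : 0 < A + s*c1 := add_pos_of_pos_of_nonneg hA (mul_nonneg hs.le hc1)
  have p2 : 0 < A + s*c2 := add_pos_of_pos_of_nonneg hA (mul_nonneg hs.le hc2)
  have p3 : 0 < A + s*c3 := add_pos_of_pos_of_nonneg hA (mul_nonneg hs.le hc3)
  have p4 : 0 < A + s*c4 := add_pos_of_pos_of_nonneg hA (mul_nonneg hs.le hc4)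
  have q1 : 0 < A + t*c1 := add_pos_of_pos_of_nonneg hA (mul_nonneg ht.le hc1)
  have q2 : 0 < A + t*c2 := add_pos_of_pos_of_nonneg hA (mul_nonneg ht.le hc2)
  have q3 : 0 < A + t*c3 := add_pos_of_pos_of_nonneg hA (mul_nonneg ht.le hc3)
  have q4 : 0 < A + t*c4 := add_pos_of_pos_of_nonneg hA (mul_nonneg ht.le hc4)
  set a1 := Real.sqrt (A + s*c1) with ha1d
  set a2 := Real.sqrt (A + s*c2) with ha2d
  set a3 := Real.sqrt (A + s*c3) with ha3d
  set a4 := Real.sqrt (A + s*c4) with ha4d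
  set b1 := Real.sqrt (A + t*c1) with hb1d
  set b2 := Real.sqrt (A + t*c2) with hb2d
  set b3 := Real.sqrt (A + t*c3) with hb3d
  set b4 := Real.sqrt (A + t*c4) with hb4d
  have pa1 : 0 < a1 := Real.sqrt_pos.mpr p1
  have pa2 : 0 < a2 := Real.sqrt_pos.mpr p2
  have pa3 : 0 < a3 := Real.sqrt_pos.mpr p3
  have pa4 : 0 < a4 := Real.sqrt_pos.mpr p4
  have pb1 : 0 < b1 := Real.sqrt_pos.mpr q1
  have pb2 : 0 < b2 := Real.sqrt_pos.mpr q2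
  have pb3 : 0 < b3 := Real.sqrt_pos.mpr q3
  have pb4 : 0 < b4 := Real.sqrt_pos.mpr q4
  have sa1 : a1^2 = A + s*c1 := Real.sq_sqrt p1.le
  have sa2 : a2^2 = A + s*c2 := Real.sq_sqrt p2.le
  have sa3 : a3^2 = A + s*c3 := Real.sq_sqrt p3.le
  have sa4 : a4^2 = A + s*c4 := Real.sq_sqrt p4.le
  have sb1 : b1^2 = A + t*c1 := Real.sq_sqrt q1.le
  have sb2 : b2^2 = A + t*c2 := Real.sq_sqrt q2.le
  have sb3 : b3^2 = A + t*c3 := Real.sq_sqrt q3.le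
  have sb4 : b4^2 = A + t*c4 := Real.sq_sqrt q4.le
  -- closed form at s
  have hFs : a2 - a1 - a4 + a3
      = δ*ρ*((s/(a1+a3) + s/(a2+a4)) * (s/((a1+a2)*(a3+a4)))) := by
    have e1 : a2 - a1 = s*δ/(a1+a2) := by
      rw [eq_div_iff (by positivity)]
      linear_combination sa2 - sa1 + s * h2
    have e2 : a4 - a3 = s*δ/(a3+a4) := by
      rw [eq_div_iff (by positivity)]
      linear_combination sa4 - sa3 + s * h4
    have e3 : a3 - a1 = s*ρ/(a1+a3) := by
      rw [eq_div_iff (by positivity)]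
      linear_combination sa3 - sa1 + s * h3
    have e4 : a4 - a2 = s*ρ/(a2+a4) := by
      rw [eq_div_iff (by positivity)]
      linear_combination sa4 - sa2 + s * h4 + s * h3 - s * h2
    have h34 : a3 + a4 - (a1 + a2) = s*ρ/(a1+a3) + s*ρ/(a2+a4) := by
      linarith only [e3, e4]
    calc a2 - a1 - a4 + a3 = s*δ/(a1+a2) - s*δ/(a3+a4) := by linarith only [e1, e2]
      _ = s*δ*((a3+a4) - (a1+a2))/((a1+a2)*(a3+a4)) := by
          rw [div_sub_div _ _ (by positivity) (by positivity), div_eq_div_iff (by positivity) (by positivity)]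
          ring
      _ = s*δ*(s*ρ/(a1+a3) + s*ρ/(a2+a4))/((a1+a2)*(a3+a4)) := by rw [h34]
      _ = δ*ρ*((s/(a1+a3) + s/(a2+a4)) * (s/((a1+a2)*(a3+a4)))) := by
          have n1 : a1 + a3 ≠ 0 := by positivity
          have n2 : a2 + a4 ≠ 0 := by positivity
          have n3 : a1 + a2 ≠ 0 := by positivity
          have n4 : a3 + a4 ≠ 0 := by positivity
          field_simp
  -- closed form at t
  have hFt : b2 - b1 - b4 + b3
      = δ*ρ*((t/(b1+b3) + t/(b2+b4)) * (t/((b1+b2)*(b3+b4)))) := by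
    have e1 : b2 - b1 = t*δ/(b1+b2) := by
      rw [eq_div_iff (by positivity)]
      linear_combination sb2 - sb1 + t * h2
    have e2 : b4 - b3 = t*δ/(b3+b4) := by
      rw [eq_div_iff (by positivity)]
      linear_combination sb4 - sb3 + t * h4
    have e3 : b3 - b1 = t*ρ/(b1+b3) := by
      rw [eq_div_iff (by positivity)]
      linear_combination sb3 - sb1 + t * h3
    have e4 : b4 - b2 = t*ρ/(b2+b4) := by
      rw [eq_div_iff (by positivity)]
      linear_combination sb4 - sb2 + t * h4 + t * h3 - t * h2
    have h34 : b3 + b4 - (b1 + b2) = t*ρ/(b1+b3) + t*ρ/(b2+b4) := by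
      linarith only [e3, e4]
    calc b2 - b1 - b4 + b3 = t*δ/(b1+b2) - t*δ/(b3+b4) := by linarith only [e1, e2]
      _ = t*δ*((b3+b4) - (b1+b2))/((b1+b2)*(b3+b4)) := by
          rw [div_sub_div _ _ (by positivity) (by positivity), div_eq_div_iff (by positivity) (by positivity)]
          ring
      _ = t*δ*(t*ρ/(b1+b3) + t*ρ/(b2+b4))/((b1+b2)*(b3+b4)) := by rw [h34]
      _ = δ*ρ*((t/(b1+b3) + t/(b2+b4)) * (t/((b1+b2)*(b3+b4)))) := by
          have n1 : b1 + b3 ≠ 0 := by positivity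
          have n2 : b2 + b4 ≠ 0 := by positivity
          have n3 : b1 + b2 ≠ 0 := by positivity
          have n4 : b3 + b4 ≠ 0 := by positivity
          field_simp
  -- u increasing
  have i1 : s * b1 < t * a1 := aux1 A c1 s t hA hc1 hs hst
  have i2 : s * b2 < t * a2 := aux1 A c2 s t hA hc2 hs hst
  have i3 : s * b3 < t * a3 := aux1 A c3 s t hA hc3 hs hst
  have i4 : s * b4 < t * a4 := aux1 A c4 s t hA hc4 hs hst
  have hu : s/(a1+a3) + s/(a2+a4) < t/(b1+b3) + t/(b2+b4) := by
    have j1 : s/(a1+a3) < t/(b1+b3) := by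
      rw [div_lt_div_iff₀ (by positivity) (by positivity)]
      have : s * (b1 + b3) = s * b1 + s * b3 := by ring
      have : t * (a1 + a3) = t * a1 + t * a3 := by ring
      linarith only [i1, i3, ‹s * (b1 + b3) = s * b1 + s * b3›,
        ‹t * (a1 + a3) = t * a1 + t * a3›]
    have j2 : s/(a2+a4) < t/(b2+b4) := by
      rw [div_lt_div_iff₀ (by positivity) (by positivity)]
      have : s * (b2 + b4) = s * b2 + s * b4 := by ring
      have : t * (a2 + a4) = t * a2 + t * a4 := by ring
      linarith only [i2, i4, ‹s * (b2 + b4) = s * b2 + s * b4›,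
        ‹t * (a2 + a4) = t * a2 + t * a4›]
    linarith only [j1, j2]
  -- v increasing
  have hv : s/((a1+a2)*(a3+a4)) < t/((b1+b2)*(b3+b4)) := by
    rw [div_lt_div_iff₀ (by positivity) (by positivity)]
    have i13 : s * (b1*b3) < t * (a1*a3) := aux2 A c1 c3 s t hA hc1 hc3 hs hst
    have i14 : s * (b1*b4) < t * (a1*a4) := aux2 A c1 c4 s t hA hc1 hc4 hs hst
    have i23 : s * (b2*b3) < t * (a2*a3) := aux2 A c2 c3 s t hA hc2 hc3 hs hst
    have i24 : s * (b2*b4) < t * (a2*a4) := aux2 A c2 c4 s t hA hc2 hc4 hs hst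
    have eL : s * ((b1+b2)*(b3+b4))
        = s * (b1*b3) + s * (b1*b4) + s * (b2*b3) + s * (b2*b4) := by ring
    have eR : t * ((a1+a2)*(a3+a4))
        = t * (a1*a3) + t * (a1*a4) + t * (a2*a3) + t * (a2*a4) := by ring
    linarith only [i13, i14, i23, i24, eL, eR]
  have hus : 0 < s/(a1+a3) + s/(a2+a4) := by positivity
  have hvs : 0 < s/((a1+a2)*(a3+a4)) := by positivity
  rw [hFs, hFt]
  apply mul_lt_mul_of_pos_left _ (by positivity : (0:ℝ) < δ*ρ)
  exact mul_lt_mul'' hu hv hus.le hvs.le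

theorem stmt_13 (Δ : ℝ) (hΔ : Δ ≠ 0) (m n : ℕ) (hmn : m < n) :
    StrictMonoOn (fun g : ℝ =>
        (1/2) * Real.sqrt (Δ^2 + 4*g^2*(m+1+1)) - (1/2) * Real.sqrt (Δ^2 + 4*g^2*(m+1))
        - (1/2) * Real.sqrt (Δ^2 + 4*g^2*(n+1+1)) + (1/2) * Real.sqrt (Δ^2 + 4*g^2*(n+1)))
      (Set.Ioi 0) := by
  intro x hx y hy hxy
  have hx0 : 0 < x := hx
  have hy0 : 0 < y := hy
  have hA : 0 < Δ^2 := by positivity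
  have hmnR : (m:ℝ) < n := by exact_mod_cast hmn
  have hkey := key (Δ^2) ((m:ℝ)+1) ((m:ℝ)+1+1) ((n:ℝ)+1) ((n:ℝ)+1+1) 1 ((n:ℝ)-(m:ℝ))
    (4*x^2) (4*y^2) hA (by positivity) one_pos (by linarith) (by ring) (by ring) (by ring)
    (by positivity) (by nlinarith)
  dsimp only
  linarith [hkey]
end

section
/- Let E_{(n,ν)}(g) = ω(n+1) + ν·(1/2)√(Δ² + 4g²(n+1)) with ν ∈ {+1, −1}. Then for n ∈ ℕ and ν ∈ {+1,−1}, the equation E_{(n,ν)}(g) = E_{(n+1,−1)}(g) holds if and only if |g| = √(ω²(2n+3) − ν√(4ω⁴(n²+3n+2) + ω²Δ²)), provided ω²(2n+3) − ν√(4ω⁴(n²+3n+2) + ω²Δ²) ≥ 0 (which holds when |Δ| < ω). -/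
private lemma sq_eq_imp {x y : ℝ} (hx : 0 ≤ x) (hy : 0 ≤ y) (h : x^2 = y^2) : x = y := by
  calc x = Real.sqrt (x^2) := (Real.sqrt_sq hx).symm
  _ = Real.sqrt (y^2) := by rw [h]
  _ = y := Real.sqrt_sq hy

theorem stmt_16 (ω Δ g ν : ℝ) (hω : 0 < ω) (hΔ : |Δ| < ω) (hν : ν = 1 ∨ ν = -1) (n : ℕ) :
    ω*(n+1) + ν * ((1/2) * Real.sqrt (Δ^2 + 4*g^2*(n+1)))
      = ω*(n+1+1) + (-1) * ((1/2) * Real.sqrt (Δ^2 + 4*g^2*(n+1+1)))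
    ↔ |g| = Real.sqrt (ω^2*(2*n+3) - ν * Real.sqrt (4*ω^4*(n^2+3*n+2) + ω^2*Δ^2)) := by
  have hΔ2 : Δ^2 < ω^2 := by
    have h1 : Δ^2 = |Δ|^2 := (sq_abs Δ).symm
    nlinarith [abs_nonneg Δ]
  have hN : (0:ℝ) ≤ (n:ℝ) := Nat.cast_nonneg n
  have hA : (0:ℝ) ≤ Δ^2 + 4*g^2*((n:ℝ)+1) := by positivity
  have hB : (0:ℝ) ≤ Δ^2 + 4*g^2*((n:ℝ)+1+1) := by positivity
  have hDarg : (0:ℝ) ≤ 4*ω^4*((n:ℝ)^2+3*(n:ℝ)+2) + ω^2*Δ^2 := by positivity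
  set a := Real.sqrt (Δ^2 + 4*g^2*((n:ℝ)+1)) with ha
  set b := Real.sqrt (Δ^2 + 4*g^2*((n:ℝ)+1+1)) with hb
  set D := Real.sqrt (4*ω^4*((n:ℝ)^2+3*(n:ℝ)+2) + ω^2*Δ^2) with hD
  have ha2 : a^2 = Δ^2 + 4*g^2*((n:ℝ)+1) := Real.sq_sqrt hA
  have hb2 : b^2 = Δ^2 + 4*g^2*((n:ℝ)+1+1) := Real.sq_sqrt hB
  have hD2 : D^2 = 4*ω^4*((n:ℝ)^2+3*(n:ℝ)+2) + ω^2*Δ^2 := Real.sq_sqrt hDarg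
  have han : 0 ≤ a := Real.sqrt_nonneg _
  have hbn : 0 ≤ b := Real.sqrt_nonneg _
  have hDnn : 0 ≤ D := Real.sqrt_nonneg _
  clear_value a b D
  have hK : (0:ℝ) < ω^2*(2*(n:ℝ)+3) := by positivity
  have hωΔ : ω^2*Δ^2 < ω^4 := by nlinarith [sq_nonneg ω, pow_pos hω 2]
  have hωn : (0:ℝ) ≤ ω^2*(n:ℝ) := by positivity
  have hω2 : (0:ℝ) < ω^2 := by positivity
  have hDlt : D < ω^2*(2*(n:ℝ)+3) := by nlinarith [hD2, hDnn, hK, hωΔ]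
  have hDgt : ω^2*(2*(n:ℝ)+2) < D := by
    nlinarith [hD2, hDnn, sq_nonneg (ω*Δ), hωn, hω2,
      mul_nonneg hω2.le (mul_nonneg hω2.le hN)]
  rcases hν with rfl | rfl
  · -- ν = 1
    have hT : 0 ≤ ω^2*(2*(n:ℝ)+3) - 1*D := by linarith
    rw [← Real.sqrt_sq_eq_abs, Real.sqrt_inj (sq_nonneg g) hT]
    constructor
    · intro h
      have hab : a + b = 2*ω := by linarith
      have key1 : ω * a = ω^2 - g^2 := by
        linear_combination ((b - a)/4 + ω/2) * hab + (1/4:ℝ) * ha2 - (1/4:ℝ) * hb2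
      have hs_le : g^2 ≤ ω^2 := by
        have := mul_nonneg hω.le han
        linarith
      have h0 : (g^2 - ω^2*(2*(n:ℝ)+3) - D)*(g^2 - ω^2*(2*(n:ℝ)+3) + D) = 0 := by
        linear_combination (-(ω*a + ω^2 - g^2)) * key1 + ω^2 * ha2 - hD2
      rcases mul_eq_zero.mp h0 with h1 | h1
      · linarith [sub_eq_zero.mp h1]
      · linarith [eq_of_sub_eq_zero (by linarith : g^2 - (ω^2*(2*(n:ℝ)+3) - D) = 0)]
    · intro h
      have key1 : ω * a = ω^2 - g^2 := by
        apply sq_eq_imp (mul_nonneg hω.le han) (by linarith)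
        linear_combination ω^2 * ha2 - (g^2 - ω^2*(2*(n:ℝ)+3) - D) * h - hD2
      have key2 : ω * b = ω^2 + g^2 := by
        apply sq_eq_imp (mul_nonneg hω.le hbn) (by positivity)
        linear_combination ω^2 * hb2 - (g^2 - ω^2*(2*(n:ℝ)+3) - D) * h - hD2
      have hab : a + b = 2*ω := by
        have h1 : ω * (a + b) = ω * (2*ω) := by linear_combination key1 + key2
        exact mul_left_cancel₀ (ne_of_gt hω) h1
      linarith
  · -- ν = -1
    have hT : 0 ≤ ω^2*(2*(n:ℝ)+3) - (-1)*D := by linarith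
    rw [← Real.sqrt_sq_eq_abs, Real.sqrt_inj (sq_nonneg g) hT]
    constructor
    · intro h
      have hab : b - a = 2*ω := by linarith
      have key1 : ω * a = g^2 - ω^2 := by
        linear_combination (-(a+b)/4 - ω/2) * hab - (1/4:ℝ) * ha2 + (1/4:ℝ) * hb2
      have hs_ge : ω^2 ≤ g^2 := by
        have := mul_nonneg hω.le han
        linarith
      have h0 : (g^2 - ω^2*(2*(n:ℝ)+3) - D)*(g^2 - ω^2*(2*(n:ℝ)+3) + D) = 0 := by
        linear_combination (-(ω*a + g^2 - ω^2)) * key1 + ω^2 * ha2 - hD2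
      rcases mul_eq_zero.mp h0 with h1 | h1
      · linarith [sub_eq_zero.mp h1]
      · linarith [eq_of_sub_eq_zero (by linarith : g^2 - (ω^2*(2*(n:ℝ)+3) - D) = 0)]
    · intro h
      have hs_ge : ω^2 ≤ g^2 := by linarith
      have key1 : ω * a = g^2 - ω^2 := by
        apply sq_eq_imp (mul_nonneg hω.le han) (by linarith)
        linear_combination ω^2 * ha2 - (g^2 - ω^2*(2*(n:ℝ)+3) + D) * h - hD2
      have key2 : ω * b = g^2 + ω^2 := by
        apply sq_eq_imp (mul_nonneg hω.le hbn) (by positivity)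
        linear_combination ω^2 * hb2 - (g^2 - ω^2*(2*(n:ℝ)+3) + D) * h - hD2
      have hab : b - a = 2*ω := by
        have h1 : ω * (b - a) = ω * (2*ω) := by linear_combination key2 - key1
        exact mul_left_cancel₀ (ne_of_gt hω) h1
      linarith
end

section
/- Let E_{(n,ν)}(g) = ω(n+1) + ν·(1/2)√(Δ² + 4g²(n+1)) with ν ∈ {+1,−1}, ω > 0, |Δ| < ω. Then E_{(n,ν)}(g) = E_{(n+2,−1)}(g) if and only if |g| = √(2ω²(n+2) − ν√(4ω⁴(n²+4n+3) + ω²Δ²)). -/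
theorem stmt_17 (ω Δ g ν : ℝ) (hω : 0 < ω) (hΔ : |Δ| < ω) (hν : ν = 1 ∨ ν = -1) (n : ℕ) :
    ω*(n+1) + ν * ((1/2) * Real.sqrt (Δ^2 + 4*g^2*(n+1)))
      = ω*(n+2+1) + (-1) * ((1/2) * Real.sqrt (Δ^2 + 4*g^2*(n+2+1)))
    ↔ |g| = Real.sqrt (2*ω^2*(n+2) - ν * Real.sqrt (4*ω^4*(n^2+4*n+3) + ω^2*Δ^2)) := by
  have hn : (0:ℝ) ≤ (n:ℝ) := Nat.cast_nonneg n
  have hω2 : (0:ℝ) < ω^2 := by positivity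
  have hΔ2 : Δ^2 < ω^2 := by nlinarith [sq_abs Δ, abs_nonneg Δ, hΔ]
  set a := Real.sqrt (Δ^2 + 4*g^2*((n:ℝ)+1)) with ha_def
  set b := Real.sqrt (Δ^2 + 4*g^2*((n:ℝ)+2+1)) with hb_def
  have ha0 : 0 ≤ a := Real.sqrt_nonneg _
  have hb0 : 0 ≤ b := Real.sqrt_nonneg _
  have ha2 : a^2 = Δ^2 + 4*g^2*((n:ℝ)+1) := Real.sq_sqrt (by positivity)
  have hb2 : b^2 = Δ^2 + 4*g^2*((n:ℝ)+2+1) := Real.sq_sqrt (by positivity)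
  set S := Real.sqrt (4*ω^4*((n:ℝ)^2+4*(n:ℝ)+3) + ω^2*Δ^2) with hS_def
  have hS0 : 0 ≤ S := Real.sqrt_nonneg _
  have hS2 : S^2 = 4*ω^4*((n:ℝ)^2+4*(n:ℝ)+3) + ω^2*Δ^2 := Real.sq_sqrt (by positivity)
  have hSlt : S < 2*ω^2*((n:ℝ)+2) := by
    rw [hS_def]
    refine (Real.sqrt_lt' (by positivity)).mpr ?_
    nlinarith [mul_lt_mul_of_pos_left hΔ2 hω2, mul_pos hω2 hω2]
  have hSgt : 2*ω^2*((n:ℝ)+1) < S := by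
    rw [hS_def]
    refine (Real.lt_sqrt (by positivity)).mpr ?_
    nlinarith [mul_pos hω2 hω2, mul_nonneg (mul_nonneg hω2.le hω2.le) hn,
      mul_nonneg hω2.le (sq_nonneg Δ)]
  rcases hν with rfl | rfl
  · -- ν = 1
    have hT : (0:ℝ) ≤ 2*ω^2*((n:ℝ)+2) - 1*S := by linarith
    rw [show |g| = Real.sqrt (g^2) from (Real.sqrt_sq_eq_abs g).symm,
        Real.sqrt_inj (sq_nonneg g) hT]
    constructor
    · intro h
      have hb' : b = 4*ω - a := by linarith
      have hsq : (4*ω - a)^2 = a^2 + 8*g^2 := by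
        rw [← hb', ha2, hb2]; ring
      have hωa : ω*a = 2*ω^2 - g^2 := by linarith [hsq]
      have hquad : (g^2 - 2*ω^2*((n:ℝ)+2) - S) * (g^2 - 2*ω^2*((n:ℝ)+2) + S) = 0 := by
        linear_combination -(ω*a + 2*ω^2 - g^2) * hωa + ω^2 * ha2 - hS2
      rcases mul_eq_zero.mp hquad with h1 | h1
      · exfalso
        linarith [mul_nonneg hω.le ha0, hω2, mul_nonneg hω2.le hn, hS0, hωa, h1]
      · linarith
    · intro h
      have hkey1 : (2*ω^2 - g^2)^2 = ω^2 * (Δ^2 + 4*g^2*((n:ℝ)+1)) := by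
        linear_combination (g^2 - 2*ω^2*((n:ℝ)+2) - S) * h + hS2
      have hkey2 : (2*ω^2 + g^2)^2 = ω^2 * (Δ^2 + 4*g^2*((n:ℝ)+2+1)) := by
        linear_combination (g^2 - 2*ω^2*((n:ℝ)+2) - S) * h + hS2
      have hg2 : g^2 < 2*ω^2 := by linarith
      have hav : a = (2*ω^2 - g^2)/ω := by
        rw [ha_def, show Δ^2 + 4*g^2*((n:ℝ)+1) = ((2*ω^2 - g^2)/ω)^2 from by
          field_simp; linear_combination -hkey1]
        exact Real.sqrt_sq (div_nonneg (by linarith) hω.le)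
      have hbv : b = (2*ω^2 + g^2)/ω := by
        rw [hb_def, show Δ^2 + 4*g^2*((n:ℝ)+2+1) = ((2*ω^2 + g^2)/ω)^2 from by
          field_simp; linear_combination -hkey2]
        exact Real.sqrt_sq (div_nonneg (by positivity) hω.le)
      rw [hav, hbv]
      field_simp
      ring
  · -- ν = -1
    have hT : (0:ℝ) ≤ 2*ω^2*((n:ℝ)+2) - (-1)*S := by linarith [mul_nonneg hω2.le hn, hS0, hω2]
    rw [show |g| = Real.sqrt (g^2) from (Real.sqrt_sq_eq_abs g).symm,
        Real.sqrt_inj (sq_nonneg g) hT]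
    constructor
    · intro h
      have hb' : b = 4*ω + a := by linarith
      have hsq : (4*ω + a)^2 = a^2 + 8*g^2 := by
        rw [← hb', ha2, hb2]; ring
      have hωa : ω*a = g^2 - 2*ω^2 := by linarith [hsq]
      have hquad : (g^2 - 2*ω^2*((n:ℝ)+2) - S) * (g^2 - 2*ω^2*((n:ℝ)+2) + S) = 0 := by
        linear_combination -(ω*a + g^2 - 2*ω^2) * hωa + ω^2 * ha2 - hS2
      rcases mul_eq_zero.mp hquad with h1 | h1
      · linarith
      · exfalso
        linarith [mul_nonneg hω.le ha0, hω2, mul_nonneg hω2.le hn, hS0, hωa, h1, hSgt]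
    · intro h
      have hkey1 : (g^2 - 2*ω^2)^2 = ω^2 * (Δ^2 + 4*g^2*((n:ℝ)+1)) := by
        linear_combination (g^2 - 2*ω^2*((n:ℝ)+2) + S) * h + hS2
      have hkey2 : (2*ω^2 + g^2)^2 = ω^2 * (Δ^2 + 4*g^2*((n:ℝ)+2+1)) := by
        linear_combination (g^2 - 2*ω^2*((n:ℝ)+2) + S) * h + hS2
      have hg2 : 2*ω^2 ≤ g^2 := by linarith [mul_nonneg hω2.le hn, hS0, hω2]
      have hav : a = (g^2 - 2*ω^2)/ω := by
        rw [ha_def, show Δ^2 + 4*g^2*((n:ℝ)+1) = ((g^2 - 2*ω^2)/ω)^2 from by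
          field_simp; linear_combination -hkey1]
        exact Real.sqrt_sq (div_nonneg (by linarith) hω.le)
      have hbv : b = (2*ω^2 + g^2)/ω := by
        rw [hb_def, show Δ^2 + 4*g^2*((n:ℝ)+2+1) = ((2*ω^2 + g^2)/ω)^2 from by
          field_simp; linear_combination -hkey2]
        exact Real.sqrt_sq (div_nonneg (by positivity) hω.le)
      rw [hav, hbv]
      field_simp
      ring
end
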